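/- arXiv:2405.03142 — 3 statements merged into one kernel-verified Lean document; each statement's English description precedes it below -/
import Mathlib

section
/- For every infinite cardinal κ₀ there exists a cardinal κ with κ₀ < κ ≤ 2^{κ₀} such that either κ is a successor cardinal κ = θ⁺ with 2^θ < 2^{θ⁺}, or κ is weakly inaccessible but not strongly inaccessible. -/
/-!
Take for `κ` the least cardinal `θ` with `2 ^ κ₀ < 2 ^ θ`; Cantor's theorem gives `κ ≤ 2 ^ κ₀`,
and `2 ^ μ = 2 ^ κ₀` for `κ₀ ≤ μ < κ`. If `κ = θ⁺` this is the required jump `2 ^ θ < 2 ^ θ⁺`.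
Otherwise `κ` is a limit cardinal; it is not a strong limit since `2 ^ κ₀ ≥ κ`, and it is regular:
writing a singular `κ` as a union of `cf κ` initial segments of size `< κ` gives
`2 ^ κ ≤ (2 ^ κ₀) ^ cf κ = 2 ^ (κ₀ · cf κ) = 2 ^ κ₀`, contradicting minimality.
-/

open Cardinal Set Ordinal Order

namespace Cardinal

theorem mk_le_sum_mk_Iio {α : Type*} [LinearOrder α] [NoMaxOrder α] {s : Set α}
    (hs : IsCofinal s) : #α ≤ sum fun i : s ↦ #(Iio i.1) := by
  rw [← mk_univ, ← isCofinal_iff_iUnion_Iio_eq_univ.1 hs, biUnion_eq_iUnion]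
  exact mk_iUnion_le_sum_mk

theorem power_le_power_cof_ord_of_forall_lt {a b c : Cardinal} (ha : a ≠ 0) (hb : ℵ₀ ≤ b)
    (h : ∀ μ < b, a ^ μ ≤ c) : a ^ b ≤ c ^ b.ord.cof := by
  induction b using Cardinal.inductionOn with | mk α
  obtain ⟨_, _, hα⟩ := exists_ord_eq_type_lt α
  have : NoMaxOrder α := by
    rw [← isSuccPrelimit_type_lt_iff, ← hα]
    exact (isSuccLimit_ord hb).isSuccPrelimit
  obtain ⟨s, hs, hs'⟩ := exists_ord_cof_eq α
  rw [hα, cof_type, ← card_ord (Order.cof _), ← hs', card_type, ← prod_const' s]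
  calc a ^ #α ≤ a ^ sum fun i : s ↦ #(Iio i.1) := power_le_power_left ha (mk_le_sum_mk_Iio hs)
    _ = prod fun i : s ↦ a ^ #(Iio i.1) := power_sum a _
    _ ≤ prod fun _ : s ↦ c := prod_le_prod _ _ fun i ↦ h _ (mk_Iio_lt i.1 hα)

theorem exists_minimal_two_power_lt (κ : Cardinal) :
    ∃ θ, κ < θ ∧ θ ≤ 2 ^ κ ∧ (2 : Cardinal) ^ κ < 2 ^ θ ∧
      ∀ μ < θ, (2 : Cardinal) ^ μ ≤ 2 ^ κ := by
  set T : Set Cardinal := {θ | (2 : Cardinal) ^ κ < 2 ^ θ}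
  have hT : 2 ^ κ ∈ T := cantor _
  have hjump : sInf T ∈ T := csInf_mem ⟨_, hT⟩
  refine ⟨sInf T, ?_, csInf_le' hT, hjump, fun μ hμ ↦ ?_⟩
  · exact lt_of_not_ge fun h ↦ (power_le_power_left two_ne_zero h).not_gt hjump
  · exact not_lt.1 (notMem_of_lt_csInf hμ (OrderBot.bddBelow T) : μ ∉ T)

theorem isRegular_of_minimal_two_power_lt {κ θ : Cardinal} (hκθ : κ < θ) (hθ : ℵ₀ ≤ θ)
    (hjump : (2 : Cardinal) ^ κ < 2 ^ θ) (h : ∀ μ < θ, (2 : Cardinal) ^ μ ≤ 2 ^ κ) :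
    θ.IsRegular := by
  refine ⟨hθ, not_lt.1 fun hθ_cof ↦ hjump.not_ge ?_⟩
  calc (2 : Cardinal) ^ θ ≤ (2 ^ κ) ^ θ.ord.cof :=
        power_le_power_cof_ord_of_forall_lt two_ne_zero hθ h
    _ = 2 ^ (κ * θ.ord.cof) := (power_mul ..).symm
    _ ≤ 2 ^ κ := h _ (mul_lt_of_lt hθ hκθ hθ_cof)

end Cardinal

/-- For every infinite cardinal `κ₀` there exists a cardinal `κ` with
`κ₀ < κ ≤ 2 ^ κ₀` such that either `κ` is a successor cardinal `θ⁺` with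
`2 ^ θ < 2 ^ θ⁺`, or `κ` is weakly inaccessible (an uncountable regular limit
cardinal) but not strongly inaccessible (i.e. not a strong limit cardinal). -/
theorem exists_successor_or_weaklyInaccessible (κ₀ : Cardinal) (hκ₀ : ℵ₀ ≤ κ₀) :
    ∃ κ : Cardinal, κ₀ < κ ∧ κ ≤ 2 ^ κ₀ ∧
      ((∃ θ : Cardinal, κ = Order.succ θ ∧ (2 : Cardinal) ^ θ < 2 ^ Order.succ θ) ∨
        (ℵ₀ < κ ∧ κ.IsRegular ∧ (∀ θ : Cardinal, κ ≠ Order.succ θ) ∧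
          ¬ κ.IsStrongLimit)) := by
  obtain ⟨κ, hκ₀κ, hκ_le, hjump, hmin⟩ := exists_minimal_two_power_lt κ₀
  refine ⟨κ, hκ₀κ, hκ_le, ?_⟩
  by_cases hsucc : ∃ θ, κ = succ θ
  · obtain ⟨θ, rfl⟩ := hsucc
    exact Or.inl ⟨θ, rfl, (hmin θ (lt_succ θ)).trans_lt hjump⟩
  · have hℵ₀κ : ℵ₀ < κ := hκ₀.trans_lt hκ₀κ
    refine Or.inr ⟨hℵ₀κ, isRegular_of_minimal_two_power_lt hκ₀κ hℵ₀κ.le hjump hmin,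
      fun θ hθ ↦ hsucc ⟨θ, hθ⟩, fun hκ ↦ ?_⟩
    exact (hκ.isStrongPrelimit hκ₀κ).not_ge hκ_le
end

section
/- Let κ₀ < κ be infinite cardinals with κ singular, and let μ be a cardinal such that 2^τ = μ for every cardinal τ with κ₀ ≤ τ < κ. Then 2^κ = μ. -/
open Cardinal Set

theorem card_lsub_le_sum {ι : Type u} (f : ι → Ordinal.{u}) :
    (Ordinal.lsub f).card ≤ Cardinal.sum fun i => (f i + 1).card := by
  have hcov : Iio (Ordinal.lsub f) ⊆ ⋃ i, Iio (f i + 1) := by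
    intro b hb
    obtain ⟨i, hi⟩ := Ordinal.lt_lsub_iff.1 hb
    exact mem_iUnion.2 ⟨i, Order.lt_add_one_iff.2 hi⟩
  have h1 : Cardinal.lift.{u} #(Iio (Ordinal.lsub f)) ≤
      Cardinal.sum fun i => #(Iio (f i + 1)) :=
    le_trans (Cardinal.lift_le.2 (mk_le_mk_of_subset hcov)) mk_iUnion_le_sum_mk_lift
  simp_rw [Ordinal.mk_Iio_ordinal, ← Cardinal.lift_sum, Cardinal.lift_lift,
    Cardinal.lift_le] at h1
  exact h1

/-- Bukovský–Hechler: if `κ₀ < κ` are infinite cardinals, `κ` is singular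
(i.e. `cf(κ) < κ`), and `2 ^ τ = μ` for every cardinal `τ` with `κ₀ ≤ τ < κ`,
then `2 ^ κ = μ`. -/
theorem bukovsky_hechler (κ₀ κ μ : Cardinal) (hκ₀ : ℵ₀ ≤ κ₀) (hlt : κ₀ < κ)
    (hinf : ℵ₀ ≤ κ) (hsing : κ.ord.cof < κ)
    (hconst : ∀ τ : Cardinal, κ₀ ≤ τ → τ < κ → 2 ^ τ = μ) :
    2 ^ κ = μ := by
  obtain ⟨ι, f, hlsub, hmk⟩ := Ordinal.exists_lsub_cof κ.ord
  set g : ι → Cardinal := fun i => max κ₀ (f i).card with hg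
  have hcof_inf : ℵ₀ ≤ κ.ord.cof := Ordinal.aleph0_le_cof.2 (Cardinal.isSuccLimit_ord hinf)
  -- each g i satisfies κ₀ ≤ g i < κ, hence 2 ^ g i = μ
  have hglt : ∀ i, g i < κ := fun i =>
    max_lt hlt (Cardinal.lt_ord.1 (hlsub ▸ Ordinal.lt_lsub f i))
  have hgμ : ∀ i, 2 ^ g i = μ := fun i => hconst _ (le_max_left _ _) (hglt i)
  -- κ ≤ sum g
  have hκle : κ ≤ Cardinal.sum g := by
    have h1 : κ ≤ Cardinal.sum fun i => (f i + 1).card := by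
      have := card_lsub_le_sum f
      rwa [hlsub, Cardinal.card_ord] at this
    refine h1.trans (Cardinal.sum_le_sum _ _ fun i => ?_)
    rw [Ordinal.card_add, Ordinal.card_one]
    calc (f i).card + 1 ≤ g i + g i :=
          add_le_add (le_max_right _ _) (one_le_aleph0.trans ((le_max_left _ _).trans' hκ₀))
      _ = g i := Cardinal.add_eq_self (hκ₀.trans (le_max_left _ _))
  -- upper bound
  set τ : Cardinal := max κ₀ κ.ord.cof with hτ
  have hτinf : ℵ₀ ≤ τ := hκ₀.trans (le_max_left _ _)
  have hτκ : τ < κ := max_lt hlt hsing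
  have hτμ : 2 ^ τ = μ := hconst _ (le_max_left _ _) hτκ
  have hle : 2 ^ κ ≤ μ := by
    calc 2 ^ κ ≤ 2 ^ Cardinal.sum g := Cardinal.power_le_power_left two_ne_zero hκle
      _ = Cardinal.prod fun i => 2 ^ g i := Cardinal.power_sum 2 g
      _ = Cardinal.prod fun _ : ι => μ := by rw [funext hgμ]
      _ = μ ^ #ι := Cardinal.prod_const' ι μ
      _ ≤ μ ^ τ := by
          have hμ0 : μ ≠ 0 := by
            rw [← hconst κ₀ le_rfl hlt]
            exact (Cardinal.power_pos κ₀ two_pos).ne'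
          exact Cardinal.power_le_power_left hμ0 (hmk ▸ le_max_right κ₀ _)
      _ = (2 ^ τ) ^ τ := by rw [hτμ]
      _ = 2 ^ (τ * τ) := (Cardinal.power_mul).symm
      _ = 2 ^ τ := by rw [Cardinal.mul_eq_self hτinf]
      _ = μ := hτμ
  have hge : μ ≤ 2 ^ κ := by
    rw [← hconst κ₀ le_rfl hlt]
    exact Cardinal.power_le_power_left two_ne_zero hlt.le
  exact le_antisymm hle hge
end

section
/- Let κ be a regular cardinal and let λ be a regular cardinal with λ ≥ κ⁺⁺. Let S ⊆ S^λ_κ be a stationary subset of λ. Then there exists a club guessing sequence (C_α : α ∈ S): that is, each C_α is a club of α of order type κ, and for every club E of λ there exists α ∈ S with C_α ⊆ E. -/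
open Cardinal Set

/-- `C` is a club (closed and unbounded set) in the limit ordinal `δ`:
`C ⊆ δ`, the supremum of every nonempty subset of `C` bounded below `δ`
belongs to `C`, and `C` is unbounded in `δ`. -/
def IsClubIn (C : Set Ordinal) (δ : Ordinal) : Prop :=
  (∀ x ∈ C, x < δ) ∧
  (∀ s : Set Ordinal, s ⊆ C → s.Nonempty → sSup s < δ → sSup s ∈ C) ∧
  (∀ β < δ, ∃ x ∈ C, β < x)

/-- `S` is a stationary subset of `lam`: `S ⊆ lam` and `S` meets every club of `lam`. -/
def IsStatIn (S : Set Ordinal) (lam : Ordinal) : Prop :=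
  (∀ x ∈ S, x < lam) ∧ ∀ C : Set Ordinal, IsClubIn C lam → (S ∩ C).Nonempty

/-!
Fix for every `α` of cofinality `κ` a cofinal sequence `g α` of length `κ`. A club `X` guesses at
`α` a club of `α` of order type `κ` whose non-limit points lie in the drop
`{sup (X ∩ g α i) : i < κ}`; it is contained in every club that contains the drop.
If no `X` guessed every club, pick for each `X` a club `D X` defeating it and build the decreasing
chain `X j = ⋂ k < j, D (X k)` for `j ≤ κ⁺`. At an accumulation point `α ∈ S` of `X κ⁺`, each of
the `κ` non-increasing sequences `j ↦ sup (X j ∩ g α i)` stabilises before `κ⁺`, so at some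
common `j` the drop of `X j` lies in `X (j + 1) ⊆ D (X j)`, and so does the guess from `X j`.
-/

open Order Filter Topology

universe u

namespace Ordinal

theorem sSup_image_Iio_lt {f : Ordinal.{u} → Ordinal.{u}} {i a : Ordinal.{u}}
    (hi : i.card < a.cof) (hf : ∀ j < i, f j < a) : sSup (f '' Iio i) < a := by
  rw [image_eq_range, ← iSup]
  refine lift_iSup_lt_of_lt_cof ?_ fun j => hf j j.2
  rwa [Cardinal.mk_Iio_ordinal, Cardinal.lift_lift, ← lift_cof, Cardinal.lift_lt]

theorem le_sSup_image_Iio (f : Ordinal.{u} → Ordinal.{u}) {i j : Ordinal.{u}} (hj : j < i) :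
    f j ≤ sSup (f '' Iio i) :=
  le_csSup bddAbove_of_small (mem_image_of_mem f hj)

theorem inter_Ioo_nonempty_of_accPt {B : Set Ordinal} {α b : Ordinal} (h : AccPt α (𝓟 B))
    (hb : b < α) : (B ∩ Ioo b α).Nonempty :=
  (SuccOrder.accPt_principal.1 h).2 b hb

theorem sSup_inter_Iio_of_accPt {C : Set Ordinal} {γ : Ordinal} (h : AccPt γ (𝓟 C)) :
    sSup (C ∩ Iio γ) = γ := by
  refine le_antisymm (csSup_le' fun x hx => hx.2.le) (le_of_forall_lt fun b hb => ?_)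
  obtain ⟨x, hxC, hbx, hxγ⟩ := inter_Ioo_nonempty_of_accPt h hb
  exact (lt_csSup_iff (bddAbove_Iio.mono inter_subset_right) ⟨x, hxC, hxγ⟩).2 ⟨x, ⟨hxC, hxγ⟩, hbx⟩

/-- Closing off under `m` for `ω` steps produces a common accumulation point, since `Λ` has
uncountable cofinality. -/
theorem exists_accPt_of_forall_inter_Ioc {Λ β : Ordinal.{u}} (hΛ : ℵ₀ < Λ.cof)
    {𝒞 : Set (Set Ordinal.{u})} {m : Ordinal.{u} → Ordinal.{u}}
    (hm : ∀ x < Λ, x < m x ∧ m x < Λ ∧ ∀ C ∈ 𝒞, (C ∩ Ioc x (m x)).Nonempty) (hβ : β < Λ) :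
    ∃ γ < Λ, β < γ ∧ ∀ C ∈ 𝒞, AccPt γ (𝓟 C) := by
  have hiter : ∀ n, m^[n] β < Λ := by
    intro n
    induction n with
    | zero => exact hβ
    | succ n ih => rw [Function.iterate_succ_apply']; exact (hm _ ih).2.1
  have hβγ : β < nfp m β := (hm β hβ).1.trans_le (iterate_le_nfp m β 1)
  refine ⟨_, nfp_lt_ord hΛ (fun x hx => (hm x hx).2.1) hβ, hβγ, fun C hC => ?_⟩
  refine SuccOrder.accPt_principal.2 ⟨not_isMin_of_lt hβγ, fun b hb => ?_⟩
  obtain ⟨n, hbn⟩ := lt_nfp_iff.1 hb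
  obtain ⟨y, hyC, hny, hyn⟩ := (hm _ (hiter n)).2.2 C hC
  have hlt : m^[n + 1] β < m^[n + 2] β := by
    rw [Function.iterate_succ_apply' m (n + 1)]; exact (hm _ (hiter _)).1
  rw [← Function.iterate_succ_apply' m n] at hyn
  exact ⟨y, hyC, hbn.trans hny, hyn.trans_lt (hlt.trans_le (iterate_le_nfp m β _))⟩

theorem sSup_mem_image_Iio {f : Ordinal.{u} → Ordinal.{u}} {σ i : Ordinal.{u}}
    (hf : StrictMonoOn f (Iio σ)) (hcont : ∀ j < σ, IsSuccLimit j → f j = sSup (f '' Iio j))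
    {s : Set Ordinal.{u}} (hs : s ⊆ f '' Iio σ) (hne : s.Nonempty) (hi : i < σ)
    (hsi : sSup s ≤ f i) : sSup s ∈ f '' Iio σ := by
  have hsbdd : BddAbove s := (bddAbove_of_small (s := f '' Iio σ)).mono hs
  set J := {j | j < σ ∧ f j ∈ s}
  have hJi : ∀ j ∈ J, j ≤ i := fun j hj =>
    (hf.le_iff_le hj.1 hi).1 ((le_csSup hsbdd hj.2).trans hsi)
  have hJne : J.Nonempty := by
    obtain ⟨_, hx⟩ := hne
    obtain ⟨j, hj, rfl⟩ := hs hx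
    exact ⟨j, hj, hx⟩
  have hJbdd : BddAbove J := ⟨i, hJi⟩
  have hδσ : sSup J < σ := (csSup_le hJne hJi).trans_lt hi
  have hJδ : ∀ j ∈ J, f j ≤ f (sSup J) := fun j hj =>
    (hf.le_iff_le hj.1 hδσ).2 (le_csSup hJbdd hj)
  by_cases hδJ : sSup J ∈ J
  · refine ⟨sSup J, hδσ, le_antisymm (le_csSup hsbdd hδJ.2) (csSup_le hne ?_)⟩
    rintro _ hx
    obtain ⟨j, hj, rfl⟩ := hs hx
    exact hJδ j ⟨hj, hx⟩
  · have hlim : IsSuccLimit (sSup J) := by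
      refine ⟨fun hmin => hδJ ?_, by_contra fun h => hδJ (csSup_mem_of_not_isSuccPrelimit h)⟩
      obtain ⟨j, hj⟩ := hJne
      rwa [← hmin.eq_of_le (le_csSup hJbdd hj)]
    refine ⟨sSup J, hδσ, (hcont _ hδσ hlim).trans (csSup_eq_csSup_of_forall_exists_le ?_ ?_)⟩
    · rintro _ ⟨k, hk, rfl⟩
      obtain ⟨j, hj, hkj⟩ := (lt_csSup_iff hJbdd hJne).1 hk
      exact ⟨f j, hj.2, (hf.le_iff_le (hk.trans hδσ) hj.1).2 hkj.le⟩
    · rintro _ hx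
      obtain ⟨j, hj, rfl⟩ := hs hx
      have hjδ : j < sSup J :=
        (le_csSup hJbdd ⟨hj, hx⟩).lt_of_ne fun h => hδJ (h ▸ ⟨hj, hx⟩)
      exact ⟨f j, mem_image_of_mem f hjδ, le_rfl⟩

/-- Each `F i` attains its minimum on `Iio θ`; any `j < θ` above all the minimum points works. -/
theorem exists_forall_eq_succ_of_antitone {F : Ordinal.{u} → Ordinal.{u} → Ordinal.{u}}
    {σ θ : Ordinal.{u}} (hF : ∀ i < σ, Antitone (F i)) (hθ : IsSuccLimit θ)
    (hσθ : σ.card < θ.cof) : ∃ j < θ, ∀ i < σ, F i j = F i (succ j) := by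
  have hmin : ∀ i, ∃ j < θ, ∀ j' < θ, F i j ≤ F i j' := by
    intro i
    obtain ⟨j, hj, hjeq⟩ :=
      csInf_mem (s := F i '' Iio θ) ⟨_, mem_image_of_mem _ (mem_Iio.2 hθ.bot_lt)⟩
    exact ⟨j, hj, fun j' hj' => hjeq ▸ csInf_le' (mem_image_of_mem _ hj')⟩
  choose m hmθ hm using hmin
  have hj0 : sSup (m '' Iio σ) < θ := sSup_image_Iio_lt hσθ fun i _ => hmθ i
  refine ⟨_, hj0, fun i hi => le_antisymm ?_ (hF i hi (le_succ _))⟩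
  calc F i (sSup (m '' Iio σ)) ≤ F i (m i) := hF i hi (le_sSup_image_Iio m hi)
    _ ≤ F i (succ (sSup (m '' Iio σ))) := hm i _ (hθ.succ_lt hj0)

theorem exists_le_of_sSup_succ_image_eq {A A' : Set Ordinal.{u}} (hA : BddAbove A)
    (hA' : A' ⊆ A) (h : sSup (succ '' A) = sSup (succ '' A')) : ∀ a ∈ A, ∃ a' ∈ A', a ≤ a' := by
  intro a ha
  have hbdd : BddAbove (succ '' A') := succ_mono.map_bddAbove (hA.mono hA')
  have hlt : a < sSup (succ '' A') :=
    h ▸ (lt_succ a).trans_le (le_csSup (succ_mono.map_bddAbove hA) (mem_image_of_mem _ ha))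
  obtain ⟨_, ⟨a', ha', rfl⟩, hlt⟩ := (lt_csSup_iff' hbdd).1 hlt
  exact ⟨a', ha', lt_succ_iff.1 hlt⟩

end Ordinal

theorem IsClubIn.mem_of_accPt {C : Set Ordinal} {Λ γ : Ordinal} (hC : IsClubIn C Λ) (hγ : γ < Λ)
    (h : AccPt γ (𝓟 C)) : γ ∈ C := by
  obtain ⟨x, hxC, -, hxγ⟩ := Ordinal.inter_Ioo_nonempty_of_accPt h h.isSuccLimit.bot_lt
  rw [← Ordinal.sSup_inter_Iio_of_accPt h] at hγ ⊢
  exact hC.2.1 _ inter_subset_left ⟨x, hxC, hxγ⟩ hγ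

theorem IsClubIn.setOf_accPt {X : Set Ordinal.{u}} {Λ : Ordinal.{u}} (hΛ : ℵ₀ < Λ.cof)
    (hX : IsClubIn X Λ) : IsClubIn {γ | γ < Λ ∧ AccPt γ (𝓟 X)} Λ := by
  refine ⟨fun x hx => hx.1, fun s hs ⟨z, hz⟩ hsΛ => ⟨hsΛ, ?_⟩, fun β hβ => ?_⟩
  · have hbdd : BddAbove s := bddAbove_Iio.mono fun x hx => (hs hx).1
    refine SuccOrder.accPt_principal.2
      ⟨fun hmin => (SuccOrder.accPt_principal.1 (hs hz).2).1 (hmin.mono (le_csSup hbdd hz)),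
        fun b hb => ?_⟩
    obtain ⟨w, hws, hbw⟩ := (lt_csSup_iff hbdd ⟨z, hz⟩).1 hb
    obtain ⟨x, hxX, hbx, hxw⟩ := Ordinal.inter_Ioo_nonempty_of_accPt (hs hws).2 hbw
    exact ⟨x, hxX, hbx, hxw.trans_le (le_csSup hbdd hws)⟩
  · choose! n hn using hX.2.2
    have hm : ∀ x < Λ, x < n x ∧ n x < Λ ∧ ∀ C ∈ ({X} : Set (Set Ordinal)),
        (C ∩ Ioc x (n x)).Nonempty := by
      intro x hx
      refine ⟨(hn x hx).2, hX.1 _ (hn x hx).1, ?_⟩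
      rintro C rfl
      exact ⟨n x, (hn x hx).1, (hn x hx).2, le_rfl⟩
    obtain ⟨γ, hγΛ, hβγ, hγ⟩ := Ordinal.exists_accPt_of_forall_inter_Ioc hΛ hm hβ
    exact ⟨γ, ⟨hγΛ, hγ X rfl⟩, hβγ⟩

theorem IsClubIn.biInter {Λ o : Ordinal.{u}} (hΛ : ℵ₀ < Λ.cof) (ho : o.card < Λ.cof)
    {H : Ordinal.{u} → Set Ordinal.{u}} (hH : ∀ k < o, IsClubIn (H k) Λ) :
    IsClubIn (Iio Λ ∩ ⋂ k < o, H k) Λ := by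
  refine ⟨fun x hx => hx.1, fun s hs hne hsΛ => ⟨hsΛ, mem_iInter₂.2 fun k hk =>
    (hH k hk).2.1 s (fun x hx => mem_iInter₂.1 (hs hx).2 k hk) hne hsΛ⟩, fun β hβ => ?_⟩
  have hΛlim : IsSuccLimit Λ := Ordinal.one_lt_cof_iff.1 (one_lt_aleph0.trans hΛ)
  choose! n hn using fun k (hk : k < o) => (hH k hk).2.2
  let m x := max (succ x) (sSup ((n · x) '' Iio o))
  have hm : ∀ x < Λ, x < m x ∧ m x < Λ ∧ ∀ C ∈ H '' Iio o, (C ∩ Ioc x (m x)).Nonempty := by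
    intro x hx
    refine ⟨(lt_succ x).trans_le (le_max_left _ _), max_lt (hΛlim.succ_lt hx)
      (Ordinal.sSup_image_Iio_lt ho fun k hk => (hH k hk).1 _ (hn k hk x hx).1), ?_⟩
    rintro _ ⟨k, hk, rfl⟩
    exact ⟨n k x, (hn k hk x hx).1, (hn k hk x hx).2,
      (Ordinal.le_sSup_image_Iio (n · x) hk).trans (le_max_right _ _)⟩
  obtain ⟨γ, hγΛ, hβγ, hγ⟩ := Ordinal.exists_accPt_of_forall_inter_Ioc hΛ hm hβ
  exact ⟨γ, ⟨hγΛ, mem_iInter₂.2 fun k hk =>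
    (hH k hk).mem_of_accPt hγΛ (hγ _ (mem_image_of_mem H hk))⟩, hβγ⟩

namespace ClubGuessing

structure IsCofinalSeq (g : Ordinal.{u} → Ordinal.{u}) (σ α : Ordinal.{u}) : Prop where
  le_ord_cof : σ ≤ α.cof.ord
  monotoneOn : MonotoneOn g (Iio σ)
  lt : ∀ i < σ, g i < α
  exists_le : ∀ β < α, ∃ i < σ, β ≤ g i

theorem exists_isCofinalSeq (α : Ordinal.{u}) : ∃ g, IsCofinalSeq g α.cof.ord α := by
  obtain ⟨f, hf⟩ := Ordinal.exists_isFundamentalSeq (o := α) rfl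
  refine ⟨fun i => if h : i < α.cof.ord then (f ⟨i, h⟩ : Ordinal) else 0, le_rfl, ?_, ?_, ?_⟩
  · intro i hi j hj hij
    simp only [dif_pos (mem_Iio.1 hi), dif_pos (mem_Iio.1 hj)]
    exact hf.strictMono.monotone (Subtype.mk_le_mk.2 hij)
  · intro i hi
    simp only [dif_pos hi]
    exact (f _).2
  · intro β hβ
    obtain ⟨_, ⟨i, rfl⟩, hi⟩ := hf.isCofinal_range ⟨β, hβ⟩
    exact ⟨i, i.2, by rw [dif_pos (mem_Iio.1 i.2)]; exact hi⟩

variable {σ α : Ordinal.{u}}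

section Ladder

variable {g : Ordinal.{u} → Ordinal.{u}}

theorem IsCofinalSeq.isSuccLimit (hg : IsCofinalSeq g σ α) (hσ : IsSuccLimit σ) :
    IsSuccLimit α := by
  refine Ordinal.one_lt_cof_iff.1 ?_
  have := (Ordinal.one_lt_of_isSuccLimit hσ).trans_le hg.le_ord_cof
  rwa [Cardinal.lt_ord, Ordinal.card_one] at this

theorem IsCofinalSeq.card_lt_cof (hg : IsCofinalSeq g σ α) {i : Ordinal.{u}} (hi : i < σ) :
    i.card < α.cof :=
  Cardinal.lt_ord.1 (hi.trans_le hg.le_ord_cof)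

open scoped Classical in
noncomputable def ladder (g : Ordinal.{u} → Ordinal.{u}) (B : Set Ordinal.{u}) :
    Ordinal.{u} → Ordinal.{u}
  | i => if IsSuccLimit i then sSup (range fun j : Iio i => ladder g B j)
    else sInf {x ∈ B | g i < x ∧ ∀ j : Iio i, ladder g B j < x}
termination_by i => i
decreasing_by all_goals exact j.2

variable {B : Set Ordinal.{u}} {i : Ordinal.{u}}

theorem ladder_of_isSuccLimit (h : IsSuccLimit i) : ladder g B i = sSup (ladder g B '' Iio i) := by
  rw [ladder, if_pos h, image_eq_range]

theorem ladder_of_not_isSuccLimit (h : ¬IsSuccLimit i) :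
    ladder g B i = sInf {x ∈ B | g i < x ∧ ∀ j < i, ladder g B j < x} := by
  rw [ladder, if_neg h]
  simp only [Subtype.forall, mem_Iio]

section Properties

variable (hg : IsCofinalSeq g σ α) (hB : AccPt α (𝓟 B))
include hg hB

theorem exists_mem_lt_of_forall_lt {f : Ordinal.{u} → Ordinal.{u}} (hi : i < σ)
    (hf : ∀ j < i, f j < α) : ∃ x ∈ {x ∈ B | g i < x ∧ ∀ j < i, f j < x}, x < α := by
  have hmax : max (g i) (sSup (f '' Iio i)) < α :=
    max_lt (hg.lt i hi) (Ordinal.sSup_image_Iio_lt (hg.card_lt_cof hi) hf)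
  obtain ⟨x, hxB, hx, hxα⟩ := Ordinal.inter_Ioo_nonempty_of_accPt hB hmax
  exact ⟨x, ⟨hxB, (le_max_left _ _).trans_lt hx, fun j hj =>
    (Ordinal.le_sSup_image_Iio f hj).trans_lt ((le_max_right _ _).trans_lt hx)⟩, hxα⟩

theorem ladder_mem_of_not_isSuccLimit (hi : i < σ) (hlim : ¬IsSuccLimit i)
    (hlt : ∀ j < i, ladder g B j < α) :
    ladder g B i ∈ {x ∈ B | g i < x ∧ ∀ j < i, ladder g B j < x} ∧ ladder g B i < α := by
  obtain ⟨x, hx, hxα⟩ := exists_mem_lt_of_forall_lt hg hB hi hlt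
  rw [ladder_of_not_isSuccLimit hlim]
  exact ⟨csInf_mem ⟨x, hx⟩, (csInf_le' hx).trans_lt hxα⟩

theorem ladder_lt_and_forall_lt :
    ∀ i < σ, ladder g B i < α ∧ ∀ j < i, ladder g B j < ladder g B i := by
  intro i
  induction i using WellFoundedLT.induction with
  | _ i IH =>
  intro hi
  have hlt : ∀ j < i, ladder g B j < α := fun j hj => (IH j hj (hj.trans hi)).1
  by_cases hlim : IsSuccLimit i
  · rw [ladder_of_isSuccLimit hlim]
    refine ⟨Ordinal.sSup_image_Iio_lt (hg.card_lt_cof hi) hlt, fun j hj => ?_⟩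
    have hj' := hlim.succ_lt hj
    exact ((IH _ hj' (hj'.trans hi)).2 j (lt_succ j)).trans_le
      (Ordinal.le_sSup_image_Iio _ hj')
  · obtain ⟨⟨-, -, hgt⟩, hα⟩ := ladder_mem_of_not_isSuccLimit hg hB hi hlim hlt
    exact ⟨hα, hgt⟩

theorem ladder_lt (hi : i < σ) : ladder g B i < α :=
  (ladder_lt_and_forall_lt hg hB i hi).1

theorem strictMonoOn_ladder : StrictMonoOn (ladder g B) (Iio σ) :=
  fun j _ i hi hji => (ladder_lt_and_forall_lt hg hB i hi).2 j hji

theorem ladder_mem (hi : i < σ) (hlim : ¬IsSuccLimit i) : ladder g B i ∈ B :=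
  (ladder_mem_of_not_isSuccLimit hg hB hi hlim fun _ hj => ladder_lt hg hB (hj.trans hi)).1.1

theorem lt_ladder (hi : i < σ) (hlim : ¬IsSuccLimit i) : g i < ladder g B i :=
  (ladder_mem_of_not_isSuccLimit hg hB hi hlim fun _ hj => ladder_lt hg hB (hj.trans hi)).1.2.1

theorem exists_lt_ladder (hσ : IsSuccLimit σ) {β : Ordinal.{u}} (hβ : β < α) :
    ∃ i < σ, β < ladder g B i := by
  obtain ⟨i, hi, hβi⟩ := hg.exists_le β hβ
  have hi' := hσ.succ_lt hi
  exact ⟨_, hi', hβi.trans_lt ((hg.monotoneOn hi hi' (le_succ i)).trans_lt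
    (lt_ladder hg hB hi' (not_isSuccLimit_succ i)))⟩

theorem isClubIn_image_ladder (hσ : IsSuccLimit σ) : IsClubIn (ladder g B '' Iio σ) α := by
  refine ⟨?_, fun s hs hne hsα => ?_, fun β hβ => ?_⟩
  · rintro _ ⟨i, hi, rfl⟩
    exact ladder_lt hg hB hi
  · obtain ⟨i, hi, hlt⟩ := exists_lt_ladder hg hB hσ hsα
    exact Ordinal.sSup_mem_image_Iio (strictMonoOn_ladder hg hB)
      (fun j _ hj => ladder_of_isSuccLimit hj) hs hne hi hlt.le
  · obtain ⟨i, hi, hlt⟩ := exists_lt_ladder hg hB hσ hβ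
    exact ⟨_, mem_image_of_mem _ hi, hlt⟩

theorem image_ladder_subset {Y : Set Ordinal.{u}} {Λ : Ordinal.{u}} (hY : IsClubIn Y Λ)
    (hαΛ : α ≤ Λ) (hBY : B ⊆ Y) : ladder g B '' Iio σ ⊆ Y := by
  suffices ∀ i < σ, ladder g B i ∈ Y by
    rintro _ ⟨i, hi, rfl⟩
    exact this i hi
  intro i
  induction i using WellFoundedLT.induction with
  | _ i IH =>
  intro hi
  by_cases hlim : IsSuccLimit i
  · have hlt := ladder_lt hg hB hi
    rw [ladder_of_isSuccLimit hlim] at hlt ⊢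
    refine hY.2.1 _ ?_ ⟨_, mem_image_of_mem _ (mem_Iio.2 hlim.bot_lt)⟩ (hlt.trans_le hαΛ)
    rintro _ ⟨j, hj, rfl⟩
    exact IH j hj (hj.trans hi)
  · exact hBY (ladder_mem hg hB hi hlim)

end Properties

def drop (g : Ordinal.{u} → Ordinal.{u}) (σ : Ordinal.{u}) (X : Set Ordinal.{u}) :
    Set Ordinal.{u} :=
  {y | ∃ i < σ, (X ∩ Iio (g i)).Nonempty ∧ sSup (X ∩ Iio (g i)) = y}

theorem accPt_drop {X : Set Ordinal.{u}} (hg : IsCofinalSeq g σ α) (hX : AccPt α (𝓟 X)) :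
    AccPt α (𝓟 (drop g σ X)) := by
  refine SuccOrder.accPt_principal.2 ⟨(SuccOrder.accPt_principal.1 hX).1, fun b hb => ?_⟩
  obtain ⟨x, hxX, hbx, hxα⟩ := Ordinal.inter_Ioo_nonempty_of_accPt hX hb
  obtain ⟨i, hi, hxi⟩ := hg.exists_le _ (hX.isSuccLimit.succ_lt hxα)
  have hx : x ∈ X ∩ Iio (g i) := ⟨hxX, (lt_succ x).trans_le hxi⟩
  exact ⟨_, ⟨i, hi, ⟨x, hx⟩, rfl⟩,
    hbx.trans_le (le_csSup (bddAbove_Iio.mono inter_subset_right) hx),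
    (csSup_le' fun y hy => hy.2.le).trans_lt (hg.lt i hi)⟩

theorem drop_subset_of_sSup_succ_eq {X X' : Set Ordinal.{u}} {Λ : Ordinal.{u}}
    (hX' : IsClubIn X' Λ) (hX'X : X' ⊆ X) (hg : ∀ i < σ, g i < Λ)
    (h : ∀ i < σ, sSup (succ '' (X ∩ Iio (g i))) = sSup (succ '' (X' ∩ Iio (g i)))) :
    drop g σ X ⊆ X' := by
  rintro _ ⟨i, hi, hne, rfl⟩
  have hle := Ordinal.exists_le_of_sSup_succ_image_eq (bddAbove_Iio.mono inter_subset_right)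
    (inter_subset_inter_left _ hX'X) (h i hi)
  have hne' : (X' ∩ Iio (g i)).Nonempty := by
    obtain ⟨x, hx⟩ := hne
    obtain ⟨y, hy, -⟩ := hle x hx
    exact ⟨y, hy⟩
  rw [csSup_eq_csSup_of_forall_exists_le hle
    fun y hy => ⟨y, inter_subset_inter_left _ hX'X hy, le_rfl⟩]
  exact hX'.2.1 _ inter_subset_left hne' ((csSup_le' fun y hy => hy.2.le).trans_lt (hg i hi))

end Ladder

open scoped Classical in
/-- `Iio α` is a placeholder that makes every guess a club; only the guesses at accumulation
points of `X` matter. -/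
noncomputable def guessBase (g : Ordinal.{u} → Ordinal.{u} → Ordinal.{u}) (σ : Ordinal.{u})
    (X : Set Ordinal.{u}) (α : Ordinal.{u}) : Set Ordinal.{u} :=
  if AccPt α (𝓟 X) then drop (g α) σ X else Iio α

noncomputable def guess (g : Ordinal.{u} → Ordinal.{u} → Ordinal.{u}) (σ : Ordinal.{u})
    (X : Set Ordinal.{u}) (α : Ordinal.{u}) : Set Ordinal.{u} :=
  ladder (g α) (guessBase g σ X α) '' Iio σ

section Guess

variable {g : Ordinal.{u} → Ordinal.{u} → Ordinal.{u}} {X : Set Ordinal.{u}}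

theorem accPt_guessBase (hg : IsCofinalSeq (g α) σ α) (hσ : IsSuccLimit σ) :
    AccPt α (𝓟 (guessBase g σ X α)) := by
  rw [guessBase]
  split_ifs with hX
  · exact accPt_drop hg hX
  · have hα := hg.isSuccLimit hσ
    exact SuccOrder.accPt_principal.2 ⟨hα.not_isMin, fun b hb =>
      ⟨succ b, hα.succ_lt hb, lt_succ b, hα.succ_lt hb⟩⟩

theorem isClubIn_guess (hg : IsCofinalSeq (g α) σ α) (hσ : IsSuccLimit σ) :
    IsClubIn (guess g σ X α) α :=
  isClubIn_image_ladder hg (accPt_guessBase hg hσ) hσ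

theorem nonempty_orderIso_guess (hg : IsCofinalSeq (g α) σ α) (hσ : IsSuccLimit σ) :
    Nonempty (Iio σ ≃o guess g σ X α) :=
  ⟨(strictMonoOn_ladder hg (accPt_guessBase (X := X) hg hσ)).orderIso _ _⟩

theorem guess_subset {X' : Set Ordinal.{u}} {Λ : Ordinal.{u}} (hg : IsCofinalSeq (g α) σ α)
    (hX : AccPt α (𝓟 X)) (hX' : IsClubIn X' Λ) (hX'X : X' ⊆ X) (hαΛ : α < Λ)
    (h : ∀ i < σ, sSup (succ '' (X ∩ Iio (g α i))) = sSup (succ '' (X' ∩ Iio (g α i)))) :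
    guess g σ X α ⊆ X' := by
  rw [guess, guessBase, if_pos hX]
  exact image_ladder_subset hg (accPt_drop hg hX) hX' hαΛ.le
    (drop_subset_of_sSup_succ_eq hX' hX'X (fun i hi => (hg.lt i hi).trans hαΛ) h)

end Guess

noncomputable def chain (Λ : Ordinal.{u}) (D : Set Ordinal.{u} → Set Ordinal.{u}) :
    Ordinal.{u} → Set Ordinal.{u}
  | j => Iio Λ ∩ ⋂ k : Iio j, D (chain Λ D k)
termination_by j => j
decreasing_by exact k.2

section Chain

variable {Λ : Ordinal.{u}} {D : Set Ordinal.{u} → Set Ordinal.{u}}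

theorem chain_eq (j : Ordinal.{u}) : chain Λ D j = Iio Λ ∩ ⋂ k < j, D (chain Λ D k) := by
  rw [chain]
  ext x
  simp only [mem_inter_iff, mem_iInter, Subtype.forall, mem_Iio]

theorem chain_antitone : Antitone (chain Λ D) := by
  intro j j' hjj' x hx
  rw [chain_eq] at hx ⊢
  exact ⟨hx.1, mem_iInter₂.2 fun k hk => mem_iInter₂.1 hx.2 k (hk.trans_le hjj')⟩

theorem chain_succ_subset (j : Ordinal.{u}) : chain Λ D (succ j) ⊆ D (chain Λ D j) := by
  intro x hx
  rw [chain_eq] at hx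
  exact mem_iInter₂.1 hx.2 j (lt_succ j)

theorem isClubIn_chain (hΛ : ℵ₀ < Λ.cof) (hD : ∀ X, IsClubIn (D X) Λ) {j : Ordinal.{u}}
    (hj : j.card < Λ.cof) : IsClubIn (chain Λ D j) Λ :=
  chain_eq (D := D) j ▸ IsClubIn.biInter hΛ hj fun _ _ => hD _

end Chain

theorem exists_forall_isClubIn_guess_subset {g : Ordinal.{u} → Ordinal.{u} → Ordinal.{u}}
    {σ θ Λ : Ordinal.{u}} {S : Set Ordinal.{u}} (hΛ : ℵ₀ < Λ.cof) (hθ : IsSuccLimit θ)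
    (hσθ : σ.card < θ.cof) (hθΛ : θ.card < Λ.cof) (hg : ∀ α ∈ S, IsCofinalSeq (g α) σ α)
    (hS : IsStatIn S Λ) : ∃ X, ∀ E, IsClubIn E Λ → ∃ α ∈ S, guess g σ X α ⊆ E := by
  by_contra! h
  choose D hD hDS using h
  have hclub : ∀ j ≤ θ, IsClubIn (chain Λ D j) Λ := fun j hj =>
    isClubIn_chain hΛ hD ((Ordinal.card_le_card hj).trans_lt hθΛ)
  obtain ⟨α, hαS, hαΛ, hαθ⟩ := hS.2 _ ((hclub θ le_rfl).setOf_accPt hΛ)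
  -- unlike `sSup A`, the strict supremum `sSup (succ '' A)` also records whether `A` is empty
  obtain ⟨j, hjθ, hj⟩ := Ordinal.exists_forall_eq_succ_of_antitone
    (F := fun i j => sSup (succ '' (chain Λ D j ∩ Iio (g α i))))
    (fun i _ j j' hjj' => csSup_le_csSup'
      (succ_mono.map_bddAbove (bddAbove_Iio.mono inter_subset_right))
      (image_mono (inter_subset_inter_left _ (chain_antitone hjj')))) hθ hσθ
  have hacc : AccPt α (𝓟 (chain Λ D j)) :=
    hαθ.mono (principal_mono.2 (chain_antitone hjθ.le))
  exact hDS _ α hαS ((guess_subset (hg α hαS) hacc (hclub _ (hθ.succ_lt hjθ).le)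
    (chain_antitone (le_succ j)) hαΛ hj).trans (chain_succ_subset j))

end ClubGuessing

open ClubGuessing in
/-- Shelah's club guessing theorem: if `κ` is regular, `lam` is regular with
`lam ≥ κ⁺⁺`, and `S ⊆ S^lam_κ` is stationary in `lam`, then there is a
sequence `(C_α : α ∈ S)` such that each `C_α` is a club of `α` of order
type `κ` (witnessed by an order isomorphism with `Iio κ.ord`), and every club `E` of `lam` contains some `C_α`. -/
theorem clubGuessing_of_regular (κ lam : Cardinal) (hκ : κ.IsRegular)
    (hlam : lam.IsRegular) (hge : Order.succ (Order.succ κ) ≤ lam)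
    (S : Set Ordinal) (hS : S ⊆ {δ : Ordinal | δ < lam.ord ∧ δ.cof = κ})
    (hstat : IsStatIn S lam.ord) :
    ∃ C : Ordinal → Set Ordinal,
      (∀ α ∈ S, IsClubIn (C α) α ∧
        Nonempty (Set.Iio κ.ord ≃o C α)) ∧
      ∀ E : Set Ordinal, IsClubIn E lam.ord → ∃ α ∈ S, C α ⊆ E := by
  have hκ0 := hκ.aleph0_le
  have hκlam : succ κ < lam := (lt_succ _).trans_le hge
  choose g hg using exists_isCofinalSeq
  have hgS : ∀ α ∈ S, IsCofinalSeq (g α) κ.ord α := fun α hα => (hS hα).2 ▸ hg α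
  have hσ : IsSuccLimit κ.ord := Cardinal.isSuccLimit_ord hκ0
  obtain ⟨X, hX⟩ := exists_forall_isClubIn_guess_subset (θ := (succ κ).ord)
    (by rw [hlam.cof_ord]; exact hκ0.trans_lt ((lt_succ κ).trans hκlam))
    (Cardinal.isSuccLimit_ord (hκ0.trans (le_succ κ)))
    (by rw [(isRegular_succ hκ0).cof_ord, card_ord]; exact lt_succ κ)
    (by rwa [card_ord, hlam.cof_ord]) hgS hstat
  exact ⟨guess g κ.ord X, fun α hα =>
    ⟨isClubIn_guess (hgS α hα) hσ, nonempty_orderIso_guess (hgS α hα) hσ⟩, hX⟩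
end
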